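/- For every η > 0 and r ∈ ℕ there exists L ∈ ℕ such that the following holds. Let G be a finite graph and let Q be an equipartition of V(G) into r parts. Then there exists an η-regular equipartition P of V(G) that refines Q and such that each part of Q is refined into at most L parts of P. -/

import Mathlib

/-- `e(X, Y)`: the number of edges of `G` with one endpoint in `X` and the other in `Y`
(for disjoint `X` and `Y`). -/
noncomputable def edgesBetween {V : Type*} (G : SimpleGraph V) (X Y : Finset V) : ℕ :=
  {p : V × V | p.1 ∈ X ∧ p.2 ∈ Y ∧ G.Adj p.1 p.2}.ncard

/-- The density `d(X, Y) = e(X,Y)/(|X|·|Y|)` between disjoint vertex sets. -/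
noncomputable def dens {V : Type*} (G : SimpleGraph V) (X Y : Finset V) : ℝ :=
  (edgesBetween G X Y : ℝ) / ((X.card : ℝ) * (Y.card : ℝ))

/-- The pair `(A, B)` is `η`-regular: for all `X ⊆ A` and `Y ⊆ B` with `|X| ≥ η|A|` and
`|Y| ≥ η|B|` one has `|d(X,Y) − d(A,B)| ≤ η`. -/
def IsRegularPair {V : Type*} (G : SimpleGraph V) (η : ℝ) (A B : Finset V) : Prop :=
  ∀ X ⊆ A, ∀ Y ⊆ B, η * (A.card : ℝ) ≤ (X.card : ℝ) → η * (B.card : ℝ) ≤ (Y.card : ℝ) →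
    |dens G X Y - dens G A B| ≤ η

/-- A partition is `η`-regular if all but at most `η·C(t,2)` of the (unordered) pairs of
distinct parts are `η`-regular; here counted as ordered pairs, hence the factor `2`. -/
def IsRegularPartition {V : Type*} [DecidableEq V] [Fintype V] (G : SimpleGraph V) (η : ℝ)
    (P : Finpartition (Finset.univ : Finset V)) : Prop :=
  ({pq : Finset V × Finset V | pq.1 ∈ P.parts ∧ pq.2 ∈ P.parts ∧ pq.1 ≠ pq.2 ∧
      ¬ IsRegularPair G η pq.1 pq.2}.ncard : ℝ) ≤ 2 * (η * (P.parts.card.choose 2 : ℝ))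

/-! Refine each part of `Q` into a fixed number `k` of pieces, chosen so that the resulting
equipartition is large enough for the energy-increment argument of Szemerédi's regularity lemma.
Running that argument from this partition only ever refines it (the increment partition of `P`
splits each part of `P`), and since each round raises the energy, which is at most `1`, by
`ε ^ 5 / 4`, a uniform partition is reached within `⌊4 / ε ^ 5⌋₊ + 1` rounds, which bounds its
size independently of the graph. Tiny graphs are handled by the partition into singletons, and
`η ≥ 1` by running the argument with `min η 1`. -/

open Finset Fintype Function SzemerediRegularity

lemma edgesBetween_eq_card_interedges {V : Type*} [DecidableEq V] (G : SimpleGraph V)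
    [DecidableRel G.Adj] (X Y : Finset V) :
    edgesBetween G X Y = #(G.interedges X Y) := by
  rw [edgesBetween, ← Set.ncard_coe_finset]
  congr 1
  ext p
  simp [SimpleGraph.interedges, Rel.mem_interedges_iff]

lemma dens_eq_edgeDensity {V : Type*} [DecidableEq V] (G : SimpleGraph V) [DecidableRel G.Adj]
    (X Y : Finset V) : dens G X Y = G.edgeDensity X Y := by
  rw [_root_.dens, SimpleGraph.edgeDensity, Rel.edgeDensity, edgesBetween_eq_card_interedges]
  push_cast
  rfl

lemma SimpleGraph.IsUniform.isRegularPair {V : Type*} [DecidableEq V] {G : SimpleGraph V}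
    [DecidableRel G.Adj] {η : ℝ} {A B : Finset V} (h : G.IsUniform η A B) :
    IsRegularPair G η A B := by
  intro X hX Y hY hXA hYB
  rw [dens_eq_edgeDensity, dens_eq_edgeDensity]
  exact (h hX hY (by rwa [mul_comm]) (by rwa [mul_comm])).le

lemma Finpartition.IsUniform.isRegularPartition {V : Type*} [Fintype V] [DecidableEq V]
    {G : SimpleGraph V} [DecidableRel G.Adj] {η : ℝ} {P : Finpartition (univ : Finset V)}
    (h : P.IsUniform G η) : IsRegularPartition G η P := by
  have hsub : {pq : Finset V × Finset V | pq.1 ∈ P.parts ∧ pq.2 ∈ P.parts ∧ pq.1 ≠ pq.2 ∧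
      ¬ IsRegularPair G η pq.1 pq.2} ⊆ P.nonUniforms G η := by
    rintro ⟨A, B⟩ ⟨hA, hB, hAB, hreg⟩
    exact (P.mk_mem_nonUniforms G).2 ⟨hA, hB, hAB, mt SimpleGraph.IsUniform.isRegularPair hreg⟩
  have hchoose : #P.parts * (#P.parts - 1) = 2 * (#P.parts).choose 2 := by
    rw [Nat.choose_two_right, Nat.mul_div_cancel' (Nat.even_mul_pred_self _).two_dvd]
  calc _ ≤ (#(P.nonUniforms G η) : ℝ) := by
        exact_mod_cast (Set.ncard_le_ncard hsub (finite_toSet _)).trans_eq (Set.ncard_coe_finset _)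
    _ ≤ (#P.parts * (#P.parts - 1) : ℕ) * η := h
    _ = 2 * (η * ((#P.parts).choose 2 : ℕ)) := by rw [hchoose]; push_cast; ring

namespace Finpartition

variable {α : Type*} [DecidableEq α]

lemma exists_card_parts_eq_of_mul_le_card {t : Finset α} {k a : ℕ} (ha : a ≠ 0)
    (hkt : k * a ≤ #t) (htk : #t ≤ k * a + k) :
    ∃ R : Finpartition t, (∀ p ∈ R.parts, #p = a ∨ #p = a + 1) ∧ #R.parts = k := by
  obtain ⟨b, hb⟩ := Nat.exists_eq_add_of_le hkt
  have hbk : b ≤ k := by omega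
  have hsum : (k - b) * a + b * (a + 1) = #t := by
    rw [hb]
    zify [hbk]
    ring
  refine ⟨(⊥ : Finpartition t).equitabilise hsum,
    fun p hp => card_eq_of_mem_parts_equitabilise hp, ?_⟩
  rw [card_parts_equitabilise _ _ ha]
  omega

lemma IsEquipartition.exists_le_card_parts_eq_mul {s : Finset α} {Q : Finpartition s}
    (hQ : Q.IsEquipartition) {k : ℕ} (hk : 0 < k) (hQs : #Q.parts * k ≤ #s) :
    ∃ P ≤ Q, P.IsEquipartition ∧ #P.parts = #Q.parts * k := by
  set a := #s / (#Q.parts * k)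
  -- a part of `Q` has `#s / #Q.parts` or one more elements, hence between `k * a` and `k * a + k`
  have hsplit : ∀ q ∈ Q.parts, ∃ R : Finpartition q,
      (∀ p ∈ R.parts, #p = a ∨ #p = a + 1) ∧ #R.parts = k := by
    intro q hq
    have hQ0 : 0 < #Q.parts := card_pos.2 ⟨q, hq⟩
    have ha : a = #s / #Q.parts / k := (Nat.div_div_eq_div_mul _ _ _).symm
    have hlo := hQ.average_le_card_part hq
    have hhi := hQ.card_part_le_average_add_one hq
    have h₁ := Nat.div_mul_le_self (#s / #Q.parts) k
    have h₂ := Nat.lt_mul_div_succ (#s / #Q.parts) hk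
    refine exists_card_parts_eq_of_mul_le_card ?_ ?_ ?_
    · exact (Nat.div_pos hQs (Nat.mul_pos hQ0 hk)).ne'
    · rw [ha, mul_comm]; omega
    · rw [mul_add, mul_one] at h₂
      rw [ha]
      omega
  choose R hRcard hRk using hsplit
  refine ⟨Q.bind R, fun p hp => ?_, ?_, ?_⟩
  · obtain ⟨q, hq, hpq⟩ := mem_bind.1 hp
    exact ⟨q, hq, (R q hq).le hpq⟩
  · refine Set.equitableOn_iff_exists_eq_eq_add_one.2 ⟨a, fun p hp => ?_⟩
    obtain ⟨q, hq, hpq⟩ := mem_bind.1 hp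
    exact hRcard q hq p hpq
  · rw [card_bind, Finset.sum_congr rfl fun (q : Q.parts) _ => hRk q.1 q.2, sum_const,
      card_attach, smul_eq_mul]

end Finpartition

namespace SzemerediRegularity

variable {α : Type*} [DecidableEq α] [Fintype α] {G : SimpleGraph α} [DecidableRel G.Adj]
  {ε : ℝ} {P P₀ : Finpartition (univ : Finset α)}

lemma increment_le (hP : P.IsEquipartition) : increment hP G ε ≤ P := by
  intro p hp
  obtain ⟨U, hU, hpU⟩ := Finpartition.mem_bind.1 hp
  exact ⟨U, hU, (chunk hP G ε hU).le hpU⟩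

lemma le_floor_four_div_of_mul_le_energy (hε : 0 < ε) {i : ℕ}
    (h : ε ^ 5 / 4 * i ≤ P.energy G) : i ≤ ⌊4 / ε ^ 5⌋₊ := by
  have hP : (P.energy G : ℝ) ≤ 1 := mod_cast P.energy_le_one G
  refine Nat.le_floor ?_
  rw [le_div_iff₀ (by positivity)]
  linarith

variable (G)

lemma exists_le_isUniform_or_le_energy (hε₁ : ε ≤ 1) (hP₀ : P₀.IsEquipartition)
    (h₇ : 7 ≤ #P₀.parts) (h₁₀₀ : 100 ≤ 4 ^ #P₀.parts * ε ^ 5)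
    {N : ℕ} (hN : stepBound^[⌊4 / ε ^ 5⌋₊] #P₀.parts ≤ N) (hα : N * 16 ^ N ≤ card α) (i : ℕ) :
    ∃ P ≤ P₀, P.IsEquipartition ∧ #P₀.parts ≤ #P.parts ∧ #P.parts ≤ stepBound^[i] #P₀.parts ∧
      (P.IsUniform G ε ∨ ε ^ 5 / 4 * i ≤ P.energy G) := by
  have hε : 0 < ε := eps_pos h₁₀₀
  have : Nonempty α := card_pos_iff.1 <| by
    have := P₀.card_parts_le_card
    rw [card_univ] at this
    omega
  induction i with
  | zero =>
    refine ⟨P₀, le_rfl, hP₀, le_rfl, le_rfl, Or.inr ?_⟩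
    rw [Nat.cast_zero, mul_zero]
    exact_mod_cast P₀.energy_nonneg G
  | succ i ih =>
    obtain ⟨P, hPP₀, hP, hP₀P, hPi, hPG⟩ := ih
    rw [iterate_succ_apply']
    by_cases huniform : P.IsUniform G ε
    · exact ⟨P, hPP₀, hP, hP₀P, hPi.trans (le_stepBound _), Or.inl huniform⟩
    replace hPG := hPG.resolve_left huniform
    have hPN : #P.parts ≤ N := hPi.trans <| (monotone_iterate_of_id_le le_stepBound
      (le_floor_four_div_of_mul_le_energy hε hPG) _).trans hN
    have hPα : #P.parts * 16 ^ #P.parts ≤ card α :=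
      (Nat.mul_le_mul hPN (Nat.pow_le_pow_right (by norm_num) hPN)).trans hα
    have hP₁₀₀ : 100 ≤ 4 ^ #P.parts * ε ^ 5 := h₁₀₀.trans (by gcongr; norm_num)
    refine ⟨increment hP G ε, (increment_le hP).trans hPP₀, increment_isEquipartition hP G ε,
      ?_, ?_, Or.inr ?_⟩
    · rw [card_increment hPα huniform]
      exact hP₀P.trans (le_stepBound _)
    · rw [card_increment hPα huniform]
      exact stepBound_mono hPi
    · calc ε ^ 5 / 4 * ((i + 1 : ℕ) : ℝ) = ε ^ 5 / 4 * i + ε ^ 5 / 4 := by push_cast; ring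
        _ ≤ P.energy G + ε ^ 5 / 4 := by gcongr
        _ ≤ _ := energy_increment hP (h₇.trans hP₀P) hP₁₀₀ hPα huniform hε.le hε₁

theorem exists_le_isUniform (hε₁ : ε ≤ 1) (hP₀ : P₀.IsEquipartition)
    (h₇ : 7 ≤ #P₀.parts) (h₁₀₀ : 100 ≤ 4 ^ #P₀.parts * ε ^ 5)
    {N : ℕ} (hN : stepBound^[⌊4 / ε ^ 5⌋₊] #P₀.parts ≤ N) (hα : N * 16 ^ N ≤ card α) :
    ∃ P ≤ P₀, P.IsEquipartition ∧ #P.parts ≤ stepBound^[⌊4 / ε ^ 5⌋₊ + 1] #P₀.parts ∧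
      P.IsUniform G ε := by
  obtain ⟨P, hPP₀, hP, -, hPcard, hPG⟩ :=
    exists_le_isUniform_or_le_energy G hε₁ hP₀ h₇ h₁₀₀ hN hα (⌊4 / ε ^ 5⌋₊ + 1)
  refine ⟨P, hPP₀, hP, hPcard, hPG.resolve_right fun hPenergy => ?_⟩
  have := le_floor_four_div_of_mul_le_energy (eps_pos h₁₀₀) hPenergy
  omega

end SzemerediRegularity

/-- refined regularity lemma. For every `η > 0` and `r` there is `L` such
that every graph `G` with an equipartition `Q` of its vertex set into `r` parts admits an
`η`-regular equipartition `P` refining `Q` in which each part of `Q` is split into at most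
`L` parts. -/
theorem refined_regularity
    (η : ℝ) (hη : 0 < η) (r : ℕ) :
    ∃ L : ℕ, ∀ (V : Type) [Fintype V] [DecidableEq V] (G : SimpleGraph V)
      (Q : Finpartition (Finset.univ : Finset V)),
      Q.IsEquipartition → Q.parts.card = r →
      ∃ P : Finpartition (Finset.univ : Finset V),
        P.IsEquipartition ∧
        (∀ p ∈ P.parts, ∃ q ∈ Q.parts, p ⊆ q) ∧
        (∀ q ∈ Q.parts, ({p ∈ P.parts | p ⊆ q} : Finset (Finset V)).card ≤ L) ∧
        IsRegularPartition G η P := by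
  classical
  set ε := min η 1
  have hε : 0 < ε := lt_min hη one_pos
  set k := initialBound ε 1
  set N := stepBound^[⌊4 / ε ^ 5⌋₊] (r * k)
  refine ⟨N * 16 ^ N, fun V _ _ G Q hQ hQr => ?_⟩
  suffices ∃ P ≤ Q, P.IsEquipartition ∧ #P.parts ≤ N * 16 ^ N ∧ P.IsUniform G ε by
    obtain ⟨P, hPQ, hP, hPcard, hPG⟩ := this
    exact ⟨P, hP, hPQ, fun q _ => (card_filter_le _ _).trans hPcard,
      (hPG.mono (min_le_left _ _)).isRegularPartition⟩
  obtain hV | hV := le_or_gt (card V) (N * 16 ^ N)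
  · exact ⟨⊥, bot_le, Finpartition.bot_isEquipartition _, by rwa [Finpartition.card_bot],
      Finpartition.bot_isUniform G hε⟩
  have : Nonempty V := card_pos_iff.1 (by omega)
  have hr : 0 < r := hQr ▸ card_pos.2 (Q.parts_nonempty univ_nonempty.ne_empty)
  have hrk : r * k ≤ card V := calc
    r * k ≤ N := id_le_iterate_of_id_le le_stepBound _ _
    _ ≤ N * 16 ^ N := Nat.le_mul_of_pos_right _ (by positivity)
    _ ≤ card V := hV.le
  obtain ⟨P₀, hP₀Q, hP₀, hP₀card⟩ :=
    hQ.exists_le_card_parts_eq_mul (initialBound_pos ε 1) (by rwa [hQr, card_univ])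
  rw [hQr] at hP₀card
  have hkP₀ : k ≤ #P₀.parts := hP₀card ▸ Nat.le_mul_of_pos_left k hr
  obtain ⟨P, hPP₀, hP, hPcard, hPG⟩ := exists_le_isUniform G (min_le_right _ _) hP₀
    ((seven_le_initialBound ε 1).trans hkP₀)
    ((hundred_lt_pow_initialBound_mul hε 1).le.trans (by gcongr; norm_num))
    (by rw [hP₀card]) hV.le
  refine ⟨P, hPP₀.trans hP₀Q, hP, hPcard.trans ?_, hPG⟩
  rw [iterate_succ_apply', hP₀card, stepBound]
  gcongr
  norm_num
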